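/- arXiv:1004.1609 — 9 statements merged into one kernel-verified Lean document; each statement's English description precedes it below -/
import Mathlib

section
/- Let (V,H,L) be a holonomic space. Then there exists r > 0 such that for all u ∈ V with ‖u‖ < r and all B ∈ H, ‖u − Bu‖ ≤ L(B). -/
/-- A holonomic space structure on `V`: a subgroup `H` of the norm-preserving linear
automorphisms of `V` together with a group-norm `L` on `H` satisfying the
convexity property (P). -/
structure HolonomicSpace (V : Type*) [NormedAddCommGroup V] [NormedSpace ℝ V] where
  H : Subgroup (V ≃ₗᵢ[ℝ] V)
  L : H → ℝ
  L_nonneg : ∀ a, 0 ≤ L a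
  L_eq_zero : ∀ a, L a = 0 ↔ a = 1
  L_inv : ∀ a, L a⁻¹ = L a
  L_mul : ∀ a b, L (a * b) ≤ L a + L b
  convexity : ∀ u : V, ∃ r > 0, ∀ v w : V, ‖v - u‖ < r → ‖w - u‖ < r →
    ∀ A : H, ‖v - w‖ ^ 2 - ‖v - (A : V ≃ₗᵢ[ℝ] V) w‖ ^ 2 ≤ L A ^ 2

/-- In a holonomic space there is `r > 0` such that `‖u − B u‖ ≤ L B`
for all `u` with `‖u‖ < r` and all `B ∈ H`. -/
theorem holonomic_convexity_radius_pos
    {V : Type*} [NormedAddCommGroup V] [NormedSpace ℝ V] (HS : HolonomicSpace V) :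
    ∃ r > 0, ∀ u : V, ‖u‖ < r → ∀ B : HS.H,
      ‖u - (B : V ≃ₗᵢ[ℝ] V) u‖ ≤ HS.L B := by
  obtain ⟨r, hr, hP⟩ := HS.convexity 0
  refine ⟨r, hr, fun u hu B => ?_⟩
  have hBu : ‖(B : V ≃ₗᵢ[ℝ] V) u - 0‖ < r := by
    simpa using hu
  have hu0 : ‖u - (0 : V)‖ < r := by simpa using hu
  have := hP ((B : V ≃ₗᵢ[ℝ] V) u) u hBu hu0 B
  simp only [sub_self, norm_zero] at this
  have h2 : ‖(B : V ≃ₗᵢ[ℝ] V) u - u‖ ^ 2 ≤ HS.L B ^ 2 := by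
    simpa using this
  rw [norm_sub_rev]
  nlinarith [norm_nonneg ((B : V ≃ₗᵢ[ℝ] V) u - u), HS.L_nonneg B]
end

section
/- Let (V,H,L) be a holonomic space. Then the action H × V → V is continuous, where H carries the topology induced by the left-invariant metric d(a,b) = L(a⁻¹b). -/
/-- The basic estimate from the convexity property: if `q` is within `r/3` of a point `p₀`
with convexity radius `r`, then `s * (4r/3 - s) ≤ L(C)²` where `s = ‖Cq - q‖`. -/
lemma holo_dichotomy {V : Type*} [NormedAddCommGroup V] [NormedSpace ℝ V]
    (HS : HolonomicSpace V) (p₀ : V) (r : ℝ) (hr : 0 < r)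
    (hprop : ∀ v w : V, ‖v - p₀‖ < r → ‖w - p₀‖ < r →
      ∀ A : HS.H, ‖v - w‖ ^ 2 - ‖v - (A : V ≃ₗᵢ[ℝ] V) w‖ ^ 2 ≤ HS.L A ^ 2)
    (q : V) (hq : ‖q - p₀‖ < r / 3) (C : HS.H) :
    ‖(C : V ≃ₗᵢ[ℝ] V) q - q‖ * (4 * r / 3 - ‖(C : V ≃ₗᵢ[ℝ] V) q - q‖) ≤ HS.L C ^ 2 := by
  set s := ‖(C : V ≃ₗᵢ[ℝ] V) q - q‖ with hs
  have hs0 : 0 ≤ s := norm_nonneg _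
  rcases eq_or_lt_of_le hs0 with h0 | h0
  · have : s = 0 := h0.symm
    rw [this, zero_mul]
    positivity
  · set e : V := s⁻¹ • ((C : V ≃ₗᵢ[ℝ] V) q - q) with he_def
    have he : ‖e‖ = 1 := by
      rw [he_def, norm_smul, norm_inv, Real.norm_eq_abs, abs_of_pos h0, ← hs]
      field_simp
    have hCq : (C : V ≃ₗᵢ[ℝ] V) q = q + s • e := by
      rw [he_def, smul_smul, mul_inv_cancel₀ (ne_of_gt h0), one_smul]
      abel
    set v := q + (2 * r / 3) • e with hv_def
    have hv : ‖v - p₀‖ < r := by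
      have h1 : ‖v - p₀‖ ≤ ‖q - p₀‖ + ‖(2 * r / 3) • e‖ := by
        have : v - p₀ = (q - p₀) + (2 * r / 3) • e := by rw [hv_def]; abel
        rw [this]; exact norm_add_le _ _
      have h2 : ‖(2 * r / 3) • e‖ = 2 * r / 3 := by
        rw [norm_smul, he, mul_one, Real.norm_eq_abs, abs_of_pos (by linarith)]
      rw [h2] at h1; linarith
    have hw : ‖q - p₀‖ < r := by linarith
    have key := hprop v q hv hw C
    have hvq : ‖v - q‖ = 2 * r / 3 := by
      have : v - q = (2 * r / 3) • e := by rw [hv_def]; abel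
      rw [this, norm_smul, he, mul_one, Real.norm_eq_abs, abs_of_pos (by linarith)]
    have hvCq : ‖v - (C : V ≃ₗᵢ[ℝ] V) q‖ = |2 * r / 3 - s| := by
      have : v - (C : V ≃ₗᵢ[ℝ] V) q = (2 * r / 3 - s) • e := by
        rw [hv_def, hCq, sub_smul]; abel
      rw [this, norm_smul, he, mul_one, Real.norm_eq_abs]
    rw [hvq, hvCq] at key
    have habs : |2 * r / 3 - s| ^ 2 = (2 * r / 3 - s) ^ 2 := sq_abs _
    rw [habs] at key
    nlinarith [key]

/-- Key continuity lemma: `‖Cu - u‖` is small when `L C` is small. -/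
lemma holo_key {V : Type*} [NormedAddCommGroup V] [NormedSpace ℝ V]
    (HS : HolonomicSpace V) (u : V) {ε : ℝ} (hε : 0 < ε) :
    ∃ δ > 0, ∀ C : HS.H, HS.L C < δ → ‖(C : V ≃ₗᵢ[ℝ] V) u - u‖ < ε := by
  choose r hr hprop using HS.convexity
  set K : Set V := (fun t : ℝ => t • u) '' Set.Icc 0 1 with hK_def
  have hK : IsCompact K := isCompact_Icc.image (continuous_id.smul continuous_const)
  obtain ⟨F, hF⟩ := hK.elim_finite_subcover (fun p => Metric.ball p (r p / 3))
    (fun p => Metric.isOpen_ball)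
    (fun x _ => Set.mem_iUnion.2 ⟨x, Metric.mem_ball_self (by have := hr x; positivity)⟩)
  have h0K : (0 : V) ∈ K := ⟨0, ⟨le_refl 0, zero_le_one⟩, zero_smul ℝ u⟩
  have hFne : F.Nonempty := by
    obtain ⟨p, hp⟩ := Set.mem_iUnion₂.1 (hF h0K)
    exact ⟨p, hp.1⟩
  set ρ : ℝ := F.inf' hFne (fun p => r p / 3) with hρ_def
  have hρ : 0 < ρ := by
    rw [hρ_def, Finset.lt_inf'_iff]
    intro p _
    have := hr p; linarith
  refine ⟨min ε ρ, lt_min hε hρ, ?_⟩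
  intro C hC
  set Lc := HS.L C with hLc
  have hLc0 : 0 ≤ Lc := HS.L_nonneg C
  have hLcρ : Lc < ρ := lt_of_lt_of_le hC (min_le_right _ _)
  have hLcε : Lc < ε := lt_of_lt_of_le hC (min_le_left _ _)
  set g : ℝ → ℝ := fun t => ‖(C : V ≃ₗᵢ[ℝ] V) (t • u) - t • u‖ with hg_def
  have hg_cont : Continuous g := by
    apply Continuous.norm
    exact ((C : V ≃ₗᵢ[ℝ] V).continuous.comp (continuous_id.smul continuous_const)).sub
      (continuous_id.smul continuous_const)
  have hg0 : g 0 = 0 := by simp [hg_def]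
  -- dichotomy
  have hdich : ∀ t' ∈ Set.Icc (0:ℝ) 1, g t' ≤ Lc ∨ 3 * ρ ≤ g t' := by
    intro t' ht'
    have hmem : t' • u ∈ ⋃ p ∈ F, Metric.ball p (r p / 3) := hF ⟨t', ht', rfl⟩
    obtain ⟨p, hpF, hpb⟩ := Set.mem_iUnion₂.1 hmem
    have hd := holo_dichotomy HS p (r p) (hr p) (hprop p) (t' • u)
      (by simpa [dist_eq_norm] using hpb) C
    have hρp : ρ ≤ r p / 3 := Finset.inf'_le _ hpF
    by_contra h
    push_neg at h
    obtain ⟨h1, h2⟩ := h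
    -- h1 : Lc < g t', h2 : g t' < 3 * ρ
    have hb : Lc < 4 * r p / 3 - g t' := by
      have : g t' < r p := by linarith
      linarith
    nlinarith [hd, h1, hb, hLc0]
  -- Lipschitz-type step
  have hstep : ∀ a b : ℝ, g b ≤ g a + 2 * (|b - a| * ‖u‖) := by
    intro a b
    have hmap : ‖(C : V ≃ₗᵢ[ℝ] V) (b • u) - (C : V ≃ₗᵢ[ℝ] V) (a • u)‖ = |b - a| * ‖u‖ := by
      rw [← map_sub, (C : V ≃ₗᵢ[ℝ] V).norm_map, ← sub_smul, norm_smul, Real.norm_eq_abs]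
    have hsm : ‖a • u - b • u‖ = |b - a| * ‖u‖ := by
      rw [← sub_smul, norm_smul, Real.norm_eq_abs, abs_sub_comm]
    calc g b = ‖((C : V ≃ₗᵢ[ℝ] V) (b • u) - (C : V ≃ₗᵢ[ℝ] V) (a • u))
        + ((C : V ≃ₗᵢ[ℝ] V) (a • u) - a • u) + (a • u - b • u)‖ := by
          rw [hg_def]; congr 1; abel
      _ ≤ ‖(C : V ≃ₗᵢ[ℝ] V) (b • u) - (C : V ≃ₗᵢ[ℝ] V) (a • u)‖
          + ‖(C : V ≃ₗᵢ[ℝ] V) (a • u) - a • u‖ + ‖a • u - b • u‖ := norm_add₃_le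
      _ = g a + 2 * (|b - a| * ‖u‖) := by rw [hmap, hsm, hg_def]; ring
  -- connectedness / sup argument
  set S : Set ℝ := Set.Icc (0:ℝ) 1 ∩ g ⁻¹' Set.Iic Lc with hS_def
  have hS0 : (0:ℝ) ∈ S := ⟨⟨le_refl 0, zero_le_one⟩, by simp [hg0, hLc0]⟩
  have hScomp : IsCompact S := isCompact_Icc.inter_right (isClosed_Iic.preimage hg_cont)
  have hSne : S.Nonempty := ⟨0, hS0⟩
  have hT : sSup S ∈ S := hScomp.sSup_mem hSne
  set T := sSup S with hT_def
  have hT1 : T ≤ 1 := hT.1.2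
  have hsub : ∀ t' ∈ Set.Icc (0:ℝ) 1, T ≤ t' → t' - T ≤ ρ / (2 * ‖u‖ + 1) → t' ∈ S := by
    intro t' ht' hTt' hgap
    have hgb : g t' ≤ g T + 2 * (|t' - T| * ‖u‖) := hstep T t'
    have habs : |t' - T| = t' - T := abs_of_nonneg (by linarith)
    have hub : g t' < 3 * ρ := by
      have h1 : 2 * ((t' - T) * ‖u‖) ≤ 2 * ((ρ / (2 * ‖u‖ + 1)) * ‖u‖) := by
        have hu0 : (0:ℝ) ≤ ‖u‖ := norm_nonneg u
        nlinarith
      have h2 : 2 * ((ρ / (2 * ‖u‖ + 1)) * ‖u‖) < ρ := by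
        have hu0 : (0:ℝ) ≤ ‖u‖ := norm_nonneg u
        rw [div_mul_eq_mul_div, mul_div_assoc']
        rw [div_lt_iff₀ (by linarith)]
        nlinarith
      have := hT.2
      simp only [Set.mem_preimage, Set.mem_Iic] at this
      rw [habs] at hgb
      linarith
    rcases hdich t' ht' with h | h
    · exact ⟨ht', h⟩
    · linarith
  have hT_eq : T = 1 := by
    by_contra hne
    have hTlt : T < 1 := lt_of_le_of_ne hT1 hne
    set η : ℝ := ρ / (2 * ‖u‖ + 1) with hη_def
    have hη : 0 < η := by
      apply div_pos hρ
      have := norm_nonneg u; linarith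
    set t' : ℝ := min 1 (T + η) with ht'_def
    have ht'T : T < t' := lt_min hTlt (by linarith)
    have ht'I : t' ∈ Set.Icc (0:ℝ) 1 := ⟨le_trans hT.1.1 (le_of_lt ht'T), min_le_left _ _⟩
    have ht'S : t' ∈ S := hsub t' ht'I (le_of_lt ht'T)
      (by
        have : t' ≤ T + η := min_le_right _ _
        linarith)
    have : t' ≤ T := le_csSup ⟨1, fun x hx => hx.1.2⟩ ht'S
    linarith
  have : g 1 ≤ Lc := by
    have := hT.2
    simp only [Set.mem_preimage, Set.mem_Iic] at this
    rwa [hT_eq] at this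
  have hg1 : g 1 = ‖(C : V ≃ₗᵢ[ℝ] V) u - u‖ := by simp [hg_def]
  rw [hg1] at this
  linarith

/-- the action `H × V → V` of a holonomic space is continuous when
`H` carries the topology of the left-invariant metric `d(a,b) = L (a⁻¹ b)`. -/
theorem holonomic_action_continuous
    {V : Type*} [NormedAddCommGroup V] [NormedSpace ℝ V] (HS : HolonomicSpace V)
    (m : MetricSpace HS.H)
    (hm : ∀ a b : HS.H, m.toDist.dist a b = HS.L (a⁻¹ * b)) :
    @Continuous (HS.H × V) V
      (@instTopologicalSpaceProd _ _ m.toUniformSpace.toTopologicalSpace inferInstance)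
      inferInstance
      (fun p => (p.1 : V ≃ₗᵢ[ℝ] V) p.2) := by
  letI := m
  rw [continuous_iff_continuousAt]
  rintro ⟨A, u⟩
  rw [ContinuousAt, nhds_prod_eq, Metric.tendsto_nhds]
  intro ε hε
  obtain ⟨δ, hδ0, hkey⟩ := holo_key HS u (half_pos hε)
  have h1 : ∀ᶠ B : HS.H in nhds A, HS.L (A⁻¹ * B) < δ := by
    filter_upwards [Metric.ball_mem_nhds A hδ0] with B hB
    rw [← hm A B]
    rw [Metric.mem_ball, dist_comm] at hB
    exact hB
  have h2 : ∀ᶠ v : V in nhds u, ‖v - u‖ < ε / 2 := by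
    filter_upwards [Metric.ball_mem_nhds u (half_pos hε)] with v hv
    simpa [dist_eq_norm] using hv
  filter_upwards [h1.prod_mk h2] with p hp
  obtain ⟨B, v⟩ := p
  obtain ⟨hB, hv⟩ := hp
  rw [dist_eq_norm]
  have hDu := hkey (A⁻¹ * B) hB
  have happ : ((A⁻¹ * B : HS.H) : V ≃ₗᵢ[ℝ] V) u
      = ((A : V ≃ₗᵢ[ℝ] V)).symm ((B : V ≃ₗᵢ[ℝ] V) u) := by
    simp
  rw [happ] at hDu
  have hBA : ‖(B : V ≃ₗᵢ[ℝ] V) u - (A : V ≃ₗᵢ[ℝ] V) u‖ < ε / 2 := by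
    calc ‖(B : V ≃ₗᵢ[ℝ] V) u - (A : V ≃ₗᵢ[ℝ] V) u‖
        = ‖(A : V ≃ₗᵢ[ℝ] V) (((A : V ≃ₗᵢ[ℝ] V)).symm ((B : V ≃ₗᵢ[ℝ] V) u))
            - (A : V ≃ₗᵢ[ℝ] V) u‖ := by
          rw [LinearIsometryEquiv.apply_symm_apply]
      _ = ‖((A : V ≃ₗᵢ[ℝ] V)).symm ((B : V ≃ₗᵢ[ℝ] V) u) - u‖ := by
          rw [← map_sub, (A : V ≃ₗᵢ[ℝ] V).norm_map]
      _ < ε / 2 := hDu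
  have hBv : ‖(B : V ≃ₗᵢ[ℝ] V) v - (B : V ≃ₗᵢ[ℝ] V) u‖ = ‖v - u‖ := by
    rw [← map_sub, (B : V ≃ₗᵢ[ℝ] V).norm_map]
  have tri : ‖(B : V ≃ₗᵢ[ℝ] V) v - (A : V ≃ₗᵢ[ℝ] V) u‖
      ≤ ‖(B : V ≃ₗᵢ[ℝ] V) v - (B : V ≃ₗᵢ[ℝ] V) u‖
        + ‖(B : V ≃ₗᵢ[ℝ] V) u - (A : V ≃ₗᵢ[ℝ] V) u‖ := by
    have h : (B : V ≃ₗᵢ[ℝ] V) v - (A : V ≃ₗᵢ[ℝ] V) u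
        = ((B : V ≃ₗᵢ[ℝ] V) v - (B : V ≃ₗᵢ[ℝ] V) u)
          + ((B : V ≃ₗᵢ[ℝ] V) u - (A : V ≃ₗᵢ[ℝ] V) u) := by abel
    rw [h]; exact norm_add_le _ _
  rw [hBv] at tri
  linarith
end

section
/- Let (V,H,L) be a holonomic space. Then d_L(u,v) := inf_{a ∈ H} sqrt(L(a)² + ‖u − av‖²) defines a metric on V. -/
private lemma minkowski_aux (a b c d : ℝ) :
    Real.sqrt ((a+b)^2 + (c+d)^2) ≤ Real.sqrt (a^2+c^2) + Real.sqrt (b^2+d^2) := by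
  have h1 : (0:ℝ) ≤ a^2+c^2 := by positivity
  have h2 : (0:ℝ) ≤ b^2+d^2 := by positivity
  have hs1 := Real.sq_sqrt h1
  have hs2 := Real.sq_sqrt h2
  have hcs : a*b + c*d ≤ Real.sqrt (a^2+c^2) * Real.sqrt (b^2+d^2) := by
    rcases le_or_gt (a*b + c*d) 0 with h | h
    · exact h.trans (by positivity)
    · have hc : (a*b+c*d)^2 ≤ (a^2+c^2)*(b^2+d^2) := by nlinarith [sq_nonneg (a*d - c*b)]
      have hp : (Real.sqrt (a^2+c^2) * Real.sqrt (b^2+d^2))^2 = (a^2+c^2)*(b^2+d^2) := by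
        rw [mul_pow, hs1, hs2]
      nlinarith [mul_nonneg (Real.sqrt_nonneg (a^2+c^2)) (Real.sqrt_nonneg (b^2+d^2))]
  rw [show (a+b)^2 + (c+d)^2 = (a^2+c^2) + (b^2+d^2) + 2*(a*b+c*d) by ring]
  calc Real.sqrt ((a^2+c^2) + (b^2+d^2) + 2*(a*b+c*d))
      ≤ Real.sqrt ((Real.sqrt (a^2+c^2) + Real.sqrt (b^2+d^2))^2) :=
        Real.sqrt_le_sqrt (by nlinarith)
    _ = _ := Real.sqrt_sq (by positivity)

/-- `d_L(u,v) = inf_{a∈H} sqrt(L(a)² + ‖u − a v‖²)` is a metric on `V`. -/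
theorem holonomic_metric_exists
    {V : Type*} [NormedAddCommGroup V] [NormedSpace ℝ V] (HS : HolonomicSpace V) :
    ∃ m : MetricSpace V, ∀ u v : V,
      m.toDist.dist u v =
        ⨅ a : HS.H, Real.sqrt (HS.L a ^ 2 + ‖u - (a : V ≃ₗᵢ[ℝ] V) v‖ ^ 2) := by
  classical
  haveI : Nonempty HS.H := ⟨1⟩
  set f : V → V → HS.H → ℝ :=
    fun u v a => Real.sqrt (HS.L a ^ 2 + ‖u - (a : V ≃ₗᵢ[ℝ] V) v‖ ^ 2) with hf
  have hfnn : ∀ u v a, 0 ≤ f u v a := fun u v a => Real.sqrt_nonneg _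
  have hbdd : ∀ u v, BddBelow (Set.range (f u v)) :=
    fun u v => ⟨0, by rintro x ⟨a, rfl⟩; exact hfnn u v a⟩
  set d : V → V → ℝ := fun u v => ⨅ a, f u v a with hd
  have hdle : ∀ u v a, d u v ≤ f u v a := fun u v a => ciInf_le (hbdd u v) a
  have hdnn : ∀ u v, 0 ≤ d u v := fun u v => le_ciInf (hfnn u v)
  -- symmetry, pointwise
  have hsymm_pt : ∀ (u v : V) (a : HS.H), f v u a = f u v a⁻¹ := by
    intro u v a
    have h1 : HS.L a⁻¹ = HS.L a := HS.L_inv a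
    have hcoe : ((a⁻¹ : HS.H) : V ≃ₗᵢ[ℝ] V) = ((a : V ≃ₗᵢ[ℝ] V)).symm := by
      rw [← LinearIsometryEquiv.inv_def]; norm_cast
    have h2 : ‖u - ((a⁻¹ : HS.H) : V ≃ₗᵢ[ℝ] V) v‖ = ‖v - (a : V ≃ₗᵢ[ℝ] V) u‖ := by
      rw [hcoe]
      calc ‖u - (a : V ≃ₗᵢ[ℝ] V).symm v‖
          = ‖(a : V ≃ₗᵢ[ℝ] V) (u - (a : V ≃ₗᵢ[ℝ] V).symm v)‖ :=
            ((a : V ≃ₗᵢ[ℝ] V).norm_map _).symm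
        _ = ‖(a : V ≃ₗᵢ[ℝ] V) u - v‖ := by
            rw [map_sub, LinearIsometryEquiv.apply_symm_apply]
        _ = ‖v - (a : V ≃ₗᵢ[ℝ] V) u‖ := norm_sub_rev _ _
    simp only [hf, h1, h2]
  have hsymm : ∀ u v, d u v = d v u := by
    have key : ∀ u v : V, d u v ≤ d v u := by
      intro u v
      refine le_ciInf fun a => ?_
      rw [hsymm_pt u v a]
      exact hdle u v a⁻¹
    exact fun u v => le_antisymm (key u v) (key v u)
  -- triangle, pointwise
  have htri_pt : ∀ (u v w : V) (a b : HS.H), f u w (a*b) ≤ f u v a + f v w b := by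
    intro u v w a b
    have hL : HS.L (a*b) ≤ HS.L a + HS.L b := HS.L_mul a b
    have hLnn := HS.L_nonneg (a*b)
    have hcoe : ((a*b : HS.H) : V ≃ₗᵢ[ℝ] V) w
        = (a : V ≃ₗᵢ[ℝ] V) ((b : V ≃ₗᵢ[ℝ] V) w) := rfl
    have hn : ‖u - ((a*b : HS.H) : V ≃ₗᵢ[ℝ] V) w‖
        ≤ ‖u - (a : V ≃ₗᵢ[ℝ] V) v‖ + ‖v - (b : V ≃ₗᵢ[ℝ] V) w‖ := by
      rw [hcoe]
      calc ‖u - (a : V ≃ₗᵢ[ℝ] V) ((b : V ≃ₗᵢ[ℝ] V) w)‖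
          ≤ ‖u - (a : V ≃ₗᵢ[ℝ] V) v‖
            + ‖(a : V ≃ₗᵢ[ℝ] V) v - (a : V ≃ₗᵢ[ℝ] V) ((b : V ≃ₗᵢ[ℝ] V) w)‖ :=
            norm_sub_le_norm_sub_add_norm_sub _ _ _
        _ = ‖u - (a : V ≃ₗᵢ[ℝ] V) v‖ + ‖v - (b : V ≃ₗᵢ[ℝ] V) w‖ := by
            rw [← map_sub, (a : V ≃ₗᵢ[ℝ] V).norm_map]
    calc f u w (a*b)
        ≤ Real.sqrt ((HS.L a + HS.L b)^2
            + (‖u - (a : V ≃ₗᵢ[ℝ] V) v‖ + ‖v - (b : V ≃ₗᵢ[ℝ] V) w‖)^2) := by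
          apply Real.sqrt_le_sqrt
          have h1 : HS.L (a*b)^2 ≤ (HS.L a + HS.L b)^2 := by nlinarith
          have h2 : ‖u - ((a*b : HS.H) : V ≃ₗᵢ[ℝ] V) w‖^2
              ≤ (‖u - (a : V ≃ₗᵢ[ℝ] V) v‖ + ‖v - (b : V ≃ₗᵢ[ℝ] V) w‖)^2 := by
            have := norm_nonneg (u - ((a*b : HS.H) : V ≃ₗᵢ[ℝ] V) w)
            nlinarith
          linarith
      _ ≤ f u v a + f v w b := minkowski_aux _ _ _ _
  have htri : ∀ u v w : V, d u w ≤ d u v + d v w := by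
    intro u v w
    exact le_ciInf_add_ciInf fun a b => (hdle u w (a*b)).trans (htri_pt u v w a b)
  -- d x x = 0
  have hself : ∀ u : V, d u u = 0 := by
    intro u
    refine le_antisymm ?_ (hdnn u u)
    have h1 : f u u 1 = 0 := by
      have : HS.L 1 = 0 := (HS.L_eq_zero 1).mpr rfl
      simp [hf, this]
    exact (hdle u u 1).trans_eq h1
  -- separation
  have hsep : ∀ u v : V, d u v = 0 → u = v := by
    intro u v h0
    obtain ⟨r, hr, hP⟩ := HS.convexity 0
    set S : ℝ := ‖u‖ + ‖v‖ + 1 with hS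
    have hSpos : 0 < S := by positivity
    set t : ℝ := min 1 (r / (2 * S)) with ht
    have ht0 : 0 < t := lt_min one_pos (by positivity)
    have ht1 : t ≤ 1 := min_le_left _ _
    have hnear : ∀ x : V, ‖x‖ < 2 * S → ‖t • x - 0‖ < r := by
      intro x hx
      rw [sub_zero, norm_smul, Real.norm_eq_abs, abs_of_pos ht0]
      calc t * ‖x‖ ≤ r / (2 * S) * ‖x‖ :=
            mul_le_mul_of_nonneg_right (min_le_right _ _) (norm_nonneg x)
        _ < r / (2 * S) * (2 * S) := by
            exact mul_lt_mul_of_pos_left hx (by positivity)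
        _ = r := div_mul_cancel₀ r (by positivity)
    have key : ∀ a : HS.H, t * ‖u - v‖ ≤ f u v a := by
      intro a
      have hu2 : ‖u‖ < 2 * S := by
        have := norm_nonneg v; simp only [hS]; linarith
      have hv2 : ‖v‖ < 2 * S := by
        have := norm_nonneg u; simp only [hS]; linarith
      have hPa := hP (t • u) (t • v) (hnear u hu2) (hnear v hv2) a
      have hsm : (a : V ≃ₗᵢ[ℝ] V) (t • v) = t • ((a : V ≃ₗᵢ[ℝ] V) v) := by
        exact map_smul _ t v
      rw [hsm] at hPa
      have e1 : ‖t • u - t • v‖ = t * ‖u - v‖ := by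
        rw [← smul_sub, norm_smul, Real.norm_eq_abs, abs_of_pos ht0]
      have e2 : ‖t • u - t • ((a : V ≃ₗᵢ[ℝ] V) v)‖ = t * ‖u - (a : V ≃ₗᵢ[ℝ] V) v‖ := by
        rw [← smul_sub, norm_smul, Real.norm_eq_abs, abs_of_pos ht0]
      rw [e1, e2] at hPa
      have hsq : (t * ‖u - v‖)^2 ≤ HS.L a ^ 2 + ‖u - (a : V ≃ₗᵢ[ℝ] V) v‖ ^ 2 := by
        have hn := norm_nonneg (u - (a : V ≃ₗᵢ[ℝ] V) v)
        have h3 : (t * ‖u - (a : V ≃ₗᵢ[ℝ] V) v‖)^2 ≤ ‖u - (a : V ≃ₗᵢ[ℝ] V) v‖^2 := by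
          have ht2 : t^2 ≤ 1 := by nlinarith
          nlinarith [mul_nonneg (sub_nonneg.mpr ht2) (sq_nonneg (‖u - (a : V ≃ₗᵢ[ℝ] V) v‖))]
        linarith
      calc t * ‖u - v‖ = Real.sqrt ((t * ‖u - v‖)^2) :=
            (Real.sqrt_sq (by positivity)).symm
        _ ≤ f u v a := Real.sqrt_le_sqrt hsq
    have hle : t * ‖u - v‖ ≤ 0 := (le_ciInf key).trans_eq h0
    have hx : ‖u - v‖ ≤ 0 := by nlinarith [norm_nonneg (u - v)]
    have hz : ‖u - v‖ = 0 := le_antisymm hx (norm_nonneg _)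
    rwa [norm_eq_zero, sub_eq_zero] at hz
  exact ⟨{ dist := d, dist_self := hself, dist_comm := hsymm, dist_triangle := htri,
           eq_of_dist_eq_zero := fun h => hsep _ _ h }, fun u v => rfl⟩
end

section
/- Let V be a normed vector space, H a subgroup of norm-preserving linear automorphisms of V, and L a group-norm on H, and define d_L(u,v) = inf_{a∈H} sqrt(L(a)² + ‖u − av‖²). Then (V,H,L) satisfies the holonomic convexity property (P) if and only if the identity map from (V, ‖·‖-metric) to (V, d_L) is a local isometry (every point has a ball on which d_L(v,w) = ‖v − w‖). -/
/-- `(V,H,L)` satisfies the holonomic convexity property (P) iff the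
identity map from `(V,‖·‖)` to `(V,d_L)` is a local isometry, where
`d_L(u,v) = inf_{a∈H} sqrt(L(a)² + ‖u − a v‖²)`. -/
theorem holonomic_iff_locally_isometric
    {V : Type*} [NormedAddCommGroup V] [NormedSpace ℝ V]
    (H : Subgroup (V ≃ₗᵢ[ℝ] V)) (L : H → ℝ)
    (L_nonneg : ∀ a, 0 ≤ L a)
    (L_eq_zero : ∀ a, L a = 0 ↔ a = 1)
    (L_inv : ∀ a, L a⁻¹ = L a)
    (L_mul : ∀ a b, L (a * b) ≤ L a + L b)
    (dL : V → V → ℝ)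
    (hdL : ∀ u v : V,
      dL u v = ⨅ a : H, Real.sqrt (L a ^ 2 + ‖u - (a : V ≃ₗᵢ[ℝ] V) v‖ ^ 2)) :
    (∀ u : V, ∃ r > 0, ∀ v w : V, ‖v - u‖ < r → ‖w - u‖ < r →
        ∀ A : H, ‖v - w‖ ^ 2 - ‖v - (A : V ≃ₗᵢ[ℝ] V) w‖ ^ 2 ≤ L A ^ 2)
    ↔
    (∀ u : V, ∃ r > 0, ∀ v w : V, ‖v - u‖ < r → ‖w - u‖ < r →
        dL v w = ‖v - w‖) := by
  have hone : L 1 = 0 := (L_eq_zero 1).mpr rfl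
  have key : ∀ v w : V,
      (∀ A : H, ‖v - w‖ ^ 2 - ‖v - (A : V ≃ₗᵢ[ℝ] V) w‖ ^ 2 ≤ L A ^ 2)
      ↔ dL v w = ‖v - w‖ := by
    intro v w
    have hbdd : BddBelow (Set.range fun a : H =>
        Real.sqrt (L a ^ 2 + ‖v - (a : V ≃ₗᵢ[ℝ] V) w‖ ^ 2)) := by
      refine ⟨0, ?_⟩
      rintro x ⟨a, rfl⟩
      exact Real.sqrt_nonneg _
    constructor
    · intro hP
      rw [hdL]
      apply le_antisymm
      · have := ciInf_le hbdd (1 : H)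
        simpa [hone, Real.sqrt_sq (norm_nonneg (v - w))] using this
      · apply le_ciInf
        intro a
        have h1 : ‖v - w‖ ^ 2 ≤ L a ^ 2 + ‖v - (a : V ≃ₗᵢ[ℝ] V) w‖ ^ 2 := by
          have := hP a; linarith
        calc ‖v - w‖ = Real.sqrt (‖v - w‖ ^ 2) := by
              rw [Real.sqrt_sq (norm_nonneg _)]
          _ ≤ _ := Real.sqrt_le_sqrt h1
    · intro heq A
      have hle : dL v w ≤ Real.sqrt (L A ^ 2 + ‖v - (A : V ≃ₗᵢ[ℝ] V) w‖ ^ 2) := by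
        rw [hdL]; exact ciInf_le hbdd A
      rw [heq] at hle
      have h2 : ‖v - w‖ ^ 2 ≤ L A ^ 2 + ‖v - (A : V ≃ₗᵢ[ℝ] V) w‖ ^ 2 := by
        have hnn : (0:ℝ) ≤ L A ^ 2 + ‖v - (A : V ≃ₗᵢ[ℝ] V) w‖ ^ 2 :=
          add_nonneg (sq_nonneg _) (sq_nonneg _)
        calc ‖v - w‖ ^ 2 ≤ Real.sqrt (L A ^ 2 + ‖v - (A : V ≃ₗᵢ[ℝ] V) w‖ ^ 2) ^ 2 :=
              pow_le_pow_left₀ (norm_nonneg _) hle 2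
          _ = _ := Real.sq_sqrt hnn
      linarith
  constructor
  · intro h u
    obtain ⟨r, hr, hP⟩ := h u
    exact ⟨r, hr, fun v w hv hw => (key v w).mp (hP v w hv hw)⟩
  · intro h u
    obtain ⟨r, hr, hP⟩ := h u
    exact ⟨r, hr, fun v w hv hw => (key v w).mpr (hP v w hv hw)⟩
end

section
/- Let (V,H,L) be a holonomic space. Then H = {id_V} if and only if there exists u ∈ V whose holonomy radius is infinite, i.e., for which the convexity inequality ‖v−w‖² − ‖v−Aw‖² ≤ L(A)² holds for all v, w ∈ V and all A ∈ H with no restriction on the radius. -/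
/-- `H` is trivial iff some point has infinite holonomy radius,
i.e. the convexity inequality holds with no restriction on the radius. -/
theorem holonomic_trivial_iff_infinite_radius
    {V : Type*} [NormedAddCommGroup V] [NormedSpace ℝ V] [Nontrivial V]
    (HS : HolonomicSpace V) :
    HS.H = ⊥ ↔
      (∀ v w : V, ∀ A : HS.H,
        ‖v - w‖ ^ 2 - ‖v - (A : V ≃ₗᵢ[ℝ] V) w‖ ^ 2 ≤ HS.L A ^ 2) := by
  constructor
  · intro h v w A
    have hA : (A : V ≃ₗᵢ[ℝ] V) = 1 := by
      have hall : ∀ B ∈ HS.H, B = (1 : V ≃ₗᵢ[ℝ] V) := by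
        rw [h]; exact fun B hB => Subgroup.mem_bot.mp hB
      exact hall A.1 A.2
    rw [hA]
    simp only [LinearIsometryEquiv.coe_one, id_eq, sub_self]
    positivity
  · intro h
    rw [Subgroup.eq_bot_iff_forall]
    intro A hA
    ext w
    by_contra hw
    have hc0 : 0 < ‖A w - w‖ := by
      rw [norm_pos_iff, sub_ne_zero]
      exact hw
    set c : ℝ := ‖A w - w‖ with hc
    set ℓ : ℝ := HS.L ⟨A, hA⟩ with hℓ
    have hℓ0 : 0 ≤ ℓ := HS.L_nonneg _
    set t : ℝ := (ℓ + 1) / c with ht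
    have ht0 : 0 < t := div_pos (by linarith) hc0
    have key := h (t • (A w)) (t • w) ⟨A, hA⟩
    have hAtw : (A : V ≃ₗᵢ[ℝ] V) (t • w) = t • (A w) := by
      simp [map_smul]
    rw [hAtw, sub_self, norm_zero, ← smul_sub, norm_smul] at key
    have htc : t * c = ℓ + 1 := div_mul_cancel₀ _ (ne_of_gt hc0)
    have habs : ‖t‖ = t := abs_of_pos ht0
    rw [habs] at key
    nlinarith [key, htc]
end

section
/- Let (V,H,L) be a holonomic space with nontrivial H and let ϱ(u) denote the holonomy radius at u. Then |ϱ(u) − ϱ(v)| ≤ ‖u − v‖ for all u, v ∈ V; in particular ϱ is continuous. -/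
/-- The holonomy radius of a point `u` in a holonomic space: the supremum of the
radii `r > 0` for which the convexity property (P) holds on the `r`-ball at `u`. -/
noncomputable def holRad {V : Type*} [NormedAddCommGroup V] [NormedSpace ℝ V]
    (HS : HolonomicSpace V) (u : V) : ℝ :=
  sSup {r : ℝ | 0 < r ∧ ∀ v w : V, ‖v - u‖ < r → ‖w - u‖ < r →
    ∀ A : HS.H, ‖v - w‖ ^ 2 - ‖v - (A : V ≃ₗᵢ[ℝ] V) w‖ ^ 2 ≤ HS.L A ^ 2}

/-!
Property (P) on the `r`-ball at `u` implies property (P) on every ball contained in it, in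
particular on the `(r - ‖u - v‖)`-ball at `v`; hence `ϱ(u) ≤ ϱ(v) + ‖u - v‖`. The suprema are
finite because an `A ≠ 1` moves some `w`, and for `d = w - A w` and `v = w - t • d` one has
`‖v - w‖² - ‖v - A w‖² = (2t - 1)‖d‖²`, which exceeds `L(A)²` for large `t`.
-/

open Metric

namespace HolonomicSpace

variable {V : Type*} [NormedAddCommGroup V] [NormedSpace ℝ V] (HS : HolonomicSpace V)

def ConvexityOn (s : Set V) : Prop :=
  ∀ v w : V, v ∈ s → w ∈ s → ∀ A : HS.H, ‖v - w‖ ^ 2 - ‖v - (A : V ≃ₗᵢ[ℝ] V) w‖ ^ 2 ≤ HS.L A ^ 2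

def radii (u : V) : Set ℝ :=
  {r : ℝ | 0 < r ∧ HS.ConvexityOn (ball u r)}

variable {HS}

theorem ConvexityOn.mono {s t : Set V} (ht : HS.ConvexityOn t) (hst : s ⊆ t) :
    HS.ConvexityOn s :=
  fun v w hv hw ↦ ht v w (hst hv) (hst hw)

theorem ConvexityOn.two_mul_sub_one_mul_le {s : Set V} (hs : HS.ConvexityOn s) (A : HS.H)
    {w : V} {t : ℝ} (hw : w ∈ s) (hv : w - t • (w - (A : V ≃ₗᵢ[ℝ] V) w) ∈ s) :
    (2 * t - 1) * ‖w - (A : V ≃ₗᵢ[ℝ] V) w‖ ^ 2 ≤ HS.L A ^ 2 := by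
  set d := w - (A : V ≃ₗᵢ[ℝ] V) w
  have hvw : w - t • d - w = (-t) • d := by module
  have hvAw : w - t • d - (A : V ≃ₗᵢ[ℝ] V) w = (1 - t) • d := by simp only [d]; module
  have := hs _ w hv hw A
  rw [hvw, hvAw, norm_smul, norm_smul, mul_pow, mul_pow, Real.norm_eq_abs, Real.norm_eq_abs,
    sq_abs, sq_abs] at this
  linarith

variable (HS)

theorem holRad_eq_sSup_radii (u : V) : holRad HS u = sSup (HS.radii u) := by
  simp only [holRad, radii, ConvexityOn, mem_ball_iff_norm]

theorem radii_nonempty (u : V) : (HS.radii u).Nonempty := by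
  obtain ⟨r, hr, h⟩ := HS.convexity u
  exact ⟨r, hr, fun v w hv hw ↦ h v w (mem_ball_iff_norm.1 hv) (mem_ball_iff_norm.1 hw)⟩

theorem exists_apply_ne (hH : HS.H ≠ ⊥) : ∃ A : HS.H, ∃ w : V, (A : V ≃ₗᵢ[ℝ] V) w ≠ w := by
  obtain ⟨A, hA⟩ := Subgroup.ne_bot_iff_exists_ne_one.1 hH
  by_contra! h
  exact hA (Subtype.ext (LinearIsometryEquiv.ext (h A)))

theorem radii_bddAbove (hH : HS.H ≠ ⊥) (u : V) : BddAbove (HS.radii u) := by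
  obtain ⟨A, w, hAw⟩ := HS.exists_apply_ne hH
  set d := w - (A : V ≃ₗᵢ[ℝ] V) w
  have hd : 0 < ‖d‖ := norm_pos_iff.2 (sub_ne_zero.2 hAw.symm)
  set t := HS.L A ^ 2 / ‖d‖ ^ 2 + 1
  have ht : 1 ≤ t := le_add_of_nonneg_left (by positivity)
  refine ⟨‖w - u‖ + t * ‖d‖, fun r ⟨_, hr⟩ ↦ ?_⟩
  by_contra! hlt
  have hw : w ∈ ball u r := mem_ball_iff_norm.2 (by nlinarith)
  have hv : w - t • d ∈ ball u r := by
    refine mem_ball_iff_norm.2 (lt_of_le_of_lt ?_ hlt)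
    calc ‖w - t • d - u‖ = ‖(w - u) - t • d‖ := by rw [sub_right_comm]
      _ ≤ ‖w - u‖ + ‖t • d‖ := norm_sub_le _ _
      _ = ‖w - u‖ + t * ‖d‖ := by rw [norm_smul, Real.norm_of_nonneg (by linarith)]
  have key := hr.two_mul_sub_one_mul_le A hw hv
  have hL : (t - 1) * ‖d‖ ^ 2 = HS.L A ^ 2 := by
    rw [add_sub_cancel_right, div_mul_cancel₀ _ (by positivity)]
  nlinarith

theorem holRad_pos (hH : HS.H ≠ ⊥) (u : V) : 0 < holRad HS u := by
  obtain ⟨r, hr⟩ := HS.radii_nonempty u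
  rw [holRad_eq_sSup_radii]
  exact hr.1.trans_le (le_csSup (HS.radii_bddAbove hH u) hr)

theorem sub_norm_mem_radii {u v : V} {r : ℝ} (hr : r ∈ HS.radii u) (huv : ‖u - v‖ < r) :
    r - ‖u - v‖ ∈ HS.radii v :=
  ⟨sub_pos.2 huv, hr.2.mono (ball_subset_ball' (by rw [dist_eq_norm, norm_sub_rev]; linarith))⟩

theorem holRad_le_holRad_add_norm_sub (hH : HS.H ≠ ⊥) (u v : V) :
    holRad HS u ≤ holRad HS v + ‖u - v‖ := by
  rw [holRad_eq_sSup_radii]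
  refine csSup_le (HS.radii_nonempty u) fun r hr ↦ ?_
  rcases le_or_gt r ‖u - v‖ with h | h
  · linarith [HS.holRad_pos hH v]
  · have := le_csSup (HS.radii_bddAbove hH v) (HS.sub_norm_mem_radii hr h)
    rw [← holRad_eq_sSup_radii] at this
    linarith

theorem lipschitzWith_holRad (hH : HS.H ≠ ⊥) : LipschitzWith 1 (holRad HS) :=
  LipschitzWith.of_le_add fun u v ↦ by
    simpa only [dist_eq_norm] using HS.holRad_le_holRad_add_norm_sub hH u v

end HolonomicSpace

/-- for nontrivial `H`, the holonomy radius is 1-Lipschitz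
(`|ϱ(u) − ϱ(v)| ≤ ‖u − v‖`), hence continuous. -/
theorem holRad_lipschitz_continuous
    {V : Type*} [NormedAddCommGroup V] [NormedSpace ℝ V]
    (HS : HolonomicSpace V) (hH : HS.H ≠ ⊥) :
    (∀ u v : V, |holRad HS u - holRad HS v| ≤ ‖u - v‖) ∧
      Continuous (holRad HS) := by
  have hLip := HS.lipschitzWith_holRad hH
  refine ⟨fun u v ↦ ?_, hLip.continuous⟩
  simpa only [dist_eq_norm, Real.norm_eq_abs, NNReal.coe_one, one_mul] using hLip.dist_le_mul u v
end

section
/- Let (V,H,L) be a holonomic space. The convexity radius, defined as the supremum of r > 0 such that ‖u − Bu‖ ≤ L(B) for all u with ‖u‖ < r and all B ∈ H, equals inf_{a ∈ H, a ≠ id} L(a)/‖id_V − a‖, where ‖·‖ denotes the operator norm. -/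
/-- Scaling lemma: if `‖f u‖ ≤ C` on the open ball of radius `r`, then `‖f‖ ≤ C / r`. -/
lemma opNorm_le_div_of_ball {V : Type*} [NormedAddCommGroup V] [NormedSpace ℝ V]
    (f : V →L[ℝ] V) {r C : ℝ} (hr : 0 < r) (hC : 0 ≤ C)
    (h : ∀ u : V, ‖u‖ < r → ‖f u‖ ≤ C) : ‖f‖ ≤ C / r := by
  apply ContinuousLinearMap.opNorm_le_bound f (div_nonneg hC hr.le)
  intro x
  rw [div_mul_eq_mul_div, le_div_iff₀ hr]
  -- goal : ‖f x‖ * r ≤ C * ‖x‖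
  rcases eq_or_ne x 0 with rfl | hx
  · simp [hC]
  have hxn : (0:ℝ) < ‖x‖ := norm_pos_iff.mpr hx
  have key : ∀ s : ℝ, 0 ≤ s → s < r → s * ‖f x‖ ≤ C * ‖x‖ := by
    intro s hs hsr
    have hu : ‖(s / ‖x‖) • x‖ = s := by
      rw [norm_smul, Real.norm_eq_abs, abs_of_nonneg (div_nonneg hs hxn.le),
        div_mul_cancel₀ _ hxn.ne']
    have h1 := h ((s / ‖x‖) • x) (by rw [hu]; exact hsr)
    rw [map_smul, norm_smul, Real.norm_eq_abs, abs_of_nonneg (div_nonneg hs hxn.le)] at h1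
    have h2 : s / ‖x‖ * ‖f x‖ * ‖x‖ ≤ C * ‖x‖ := mul_le_mul_of_nonneg_right h1 hxn.le
    calc s * ‖f x‖ = s / ‖x‖ * ‖f x‖ * ‖x‖ := by field_simp
      _ ≤ C * ‖x‖ := h2
  by_contra hcon
  push_neg at hcon
  have hCx : 0 ≤ C * ‖x‖ := mul_nonneg hC hxn.le
  rcases eq_or_lt_of_le (norm_nonneg (f x)) with hfx | hfx
  · rw [← hfx] at hcon; linarith
  set s := (C * ‖x‖ / ‖f x‖ + r) / 2 with hs
  have h1 : C * ‖x‖ / ‖f x‖ < r := (div_lt_iff₀ hfx).mpr (by linarith)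
  have hs0 : 0 ≤ s := by positivity
  have hsr : s < r := by rw [hs]; linarith
  have hk := key s hs0 hsr
  have h2 : C * ‖x‖ / ‖f x‖ < s := by rw [hs]; linarith
  rw [div_lt_iff₀ hfx] at h2
  linarith


/-- the convexity radius of a holonomic space equals
`inf_{a ∈ H, a ≠ 1} L(a) / ‖id_V − a‖` (operator norm). -/
theorem cvxRad_eq_inf
    {V : Type*} [NormedAddCommGroup V] [NormedSpace ℝ V]
    (HS : HolonomicSpace V) :
    sSup {r : ℝ | 0 < r ∧ ∀ u : V, ‖u‖ < r → ∀ B : HS.H,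
        ‖u - (B : V ≃ₗᵢ[ℝ] V) u‖ ≤ HS.L B}
      = ⨅ a : {b : HS.H // b ≠ 1},
          HS.L a.1 /
            ‖ContinuousLinearMap.id ℝ V -
              ((a.1 : V ≃ₗᵢ[ℝ] V)).toLinearIsometry.toContinuousLinearMap‖ := by
  set T : HS.H → (V →L[ℝ] V) := fun B =>
    ContinuousLinearMap.id ℝ V - ((B : V ≃ₗᵢ[ℝ] V)).toLinearIsometry.toContinuousLinearMap
    with hT
  have hTapp : ∀ (B : HS.H) (u : V), T B u = u - (B : V ≃ₗᵢ[ℝ] V) u := by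
    intro B u
    simp [hT]
  have hTpos : ∀ B : HS.H, B ≠ 1 → 0 < ‖T B‖ := by
    intro B hB
    rw [norm_pos_iff]
    intro h0
    apply hB
    have : ∀ v : V, (B : V ≃ₗᵢ[ℝ] V) v = v := by
      intro v
      have := congrArg (fun f : V →L[ℝ] V => f v) h0
      simp only [ContinuousLinearMap.zero_apply] at this
      rw [hTapp] at this
      have := sub_eq_zero.mp this
      exact this.symm
    have : (B : V ≃ₗᵢ[ℝ] V) = 1 := LinearIsometryEquiv.ext fun v => this v
    exact OneMemClass.coe_eq_one.mp this
  set S : Set ℝ := {r : ℝ | 0 < r ∧ ∀ u : V, ‖u‖ < r → ∀ B : HS.H,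
      ‖u - (B : V ≃ₗᵢ[ℝ] V) u‖ ≤ HS.L B} with hS
  set f : {b : HS.H // b ≠ 1} → ℝ := fun a => HS.L a.1 / ‖T a.1‖ with hf
  show sSup S = ⨅ a, f a
  by_cases hne : Nonempty {b : HS.H // b ≠ 1}
  · -- nonempty index
    have hfnn : ∀ a, 0 ≤ f a := fun a =>
      div_nonneg (HS.L_nonneg a.1) (norm_nonneg _)
    have hbdd : BddBelow (Set.range f) := ⟨0, by rintro x ⟨a, rfl⟩; exact hfnn a⟩
    have hm0 : 0 ≤ ⨅ a, f a := Real.iInf_nonneg hfnn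
    have hSle : ∀ r ∈ S, r ≤ ⨅ a, f a := by
      intro r hr
      refine le_ciInf fun a => ?_
      have hrpos : 0 < r := hr.1
      have h1 : ‖T a.1‖ ≤ HS.L a.1 / r := by
        refine opNorm_le_div_of_ball (T a.1) hrpos (HS.L_nonneg a.1) fun u hu => ?_
        rw [hTapp]; exact hr.2 u hu a.1
      rw [le_div_iff₀ hrpos] at h1
      rw [hf, le_div_iff₀ (hTpos a.1 a.2)]
      nlinarith
    refine le_antisymm (Real.sSup_le hSle hm0) ?_
    rcases hm0.eq_or_lt with hm | hm
    · rw [← hm]; exact Real.sSup_nonneg fun r hr => hr.1.le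
    · -- m > 0 : m ∈ S
      have hmem : (⨅ a, f a) ∈ S := by
        refine ⟨hm, fun u hu B => ?_⟩
        by_cases hB : B = 1
        · subst hB
          simp [(HS.L_eq_zero 1).mpr rfl]
        · have h1 : ‖u - (B : V ≃ₗᵢ[ℝ] V) u‖ ≤ ‖T B‖ * ‖u‖ := by
            rw [← hTapp]; exact (T B).le_opNorm u
          have h2 : ‖T B‖ * ‖u‖ < ‖T B‖ * ⨅ a, f a :=
            mul_lt_mul_of_pos_left hu (hTpos B hB)
          have h3 : (⨅ a, f a) ≤ f ⟨B, hB⟩ := ciInf_le hbdd ⟨B, hB⟩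
          rw [hf, le_div_iff₀ (hTpos B hB)] at h3
          nlinarith
      exact le_csSup ⟨_, hSle⟩ hmem
  · -- empty index : both sides are 0
    haveI : IsEmpty {b : HS.H // b ≠ 1} := not_nonempty_iff.mp hne
    rw [Real.iInf_of_isEmpty]
    have hall : ∀ r : ℝ, 0 < r → r ∈ S := by
      intro r hr
      refine ⟨hr, fun u hu B => ?_⟩
      have hB : B = 1 := not_not.mp fun h => (IsEmpty.false (⟨B, h⟩ : {b : HS.H // b ≠ 1}))
      subst hB
      simp [(HS.L_eq_zero 1).mpr rfl]
    apply Real.sSup_of_not_bddAbove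
    rintro ⟨c, hc⟩
    have h1 := hc (hall (max c 0 + 1) (by positivity))
    have h2 : c ≤ max c 0 := le_max_left _ _
    linarith
end

section
/- Let (V,H,L) be a holonomic space where V is an inner product space (with ‖v‖² = ⟨v,v⟩). Then the holonomy radius at the origin equals inf_{a ∈ H, a ≠ id} L(a)/sqrt(2‖id_V − a‖), where ‖·‖ is the operator norm. -/
open RealInnerProductSpace

section Aux
variable {V : Type*} [NormedAddCommGroup V] [InnerProductSpace ℝ V]

lemma aux_key (v w : V) (A : V ≃ₗᵢ[ℝ] V) :
    ‖v - w‖ ^ 2 - ‖v - A w‖ ^ 2 = 2 * ⟪v, A w - w⟫ := by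
  have h1 := norm_sub_sq_real v w
  have h2 := norm_sub_sq_real v (A w)
  rw [A.norm_map] at h2
  rw [h1, h2, inner_sub_right]; ring

lemma aux_pos (A : V ≃ₗᵢ[ℝ] V) (hA : A ≠ 1) :
    0 < ‖ContinuousLinearMap.id ℝ V - A.toLinearIsometry.toContinuousLinearMap‖ := by
  rw [norm_pos_iff]
  intro h
  apply hA
  ext x
  have h1 := congrArg (fun f => f x) h
  have h2 : x - A x = 0 := by simpa using h1
  simpa using (sub_eq_zero.mp h2).symm

lemma aux_memS_le (HS : HolonomicSpace V) (r : ℝ) (hr0 : 0 < r)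
    (hc : ∀ v w : V, ‖v‖ < r → ‖w‖ < r →
      ∀ A : HS.H, ‖v - w‖ ^ 2 - ‖v - (A : V ≃ₗᵢ[ℝ] V) w‖ ^ 2 ≤ HS.L A ^ 2)
    (a : HS.H) (ha : a ≠ 1) :
    r ≤ HS.L a / Real.sqrt (2 * ‖ContinuousLinearMap.id ℝ V -
        ((a : V ≃ₗᵢ[ℝ] V)).toLinearIsometry.toContinuousLinearMap‖) := by
  set A : V ≃ₗᵢ[ℝ] V := (a : V ≃ₗᵢ[ℝ] V) with hA
  set T := ContinuousLinearMap.id ℝ V - A.toLinearIsometry.toContinuousLinearMap with hT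
  have hA1 : A ≠ 1 := fun h => ha (Subtype.ext h)
  have hc0 : 0 < ‖T‖ := aux_pos A hA1
  set c : ℝ := ‖T‖ with hcdef
  have hLne : HS.L a ≠ 0 := fun h => ha ((HS.L_eq_zero a).mp h)
  have hL : 0 < HS.L a := lt_of_le_of_ne (HS.L_nonneg a) (Ne.symm hLne)
  set L : ℝ := HS.L a with hLdef
  have hTapp : ∀ x : V, T x = x - A x := fun x => rfl
  have step : ∀ t : ℝ, 0 < t → t < r → t ^ 2 * (2 * c) ≤ L ^ 2 := by
    intro t ht0 htr
    have hcle : c ≤ L ^ 2 / (2 * t ^ 2) := by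
      refine T.opNorm_le_bound (by positivity) fun x => ?_
      by_cases hx : x = 0
      · simp [hx]
      have hxn : 0 < ‖x‖ := norm_pos_iff.mpr hx
      set w : V := (t / ‖x‖) • x with hw
      have hwn : ‖w‖ = t := by
        rw [hw, norm_smul, Real.norm_eq_abs, abs_of_pos (by positivity),
          div_mul_cancel₀ _ hxn.ne']
      set y : V := T w with hy
      have hyx : y = (t / ‖x‖) • T x := by rw [hy, hw, map_smul]
      by_cases hy0 : y = 0
      · have hTx : T x = 0 := by
          have h0 : (t / ‖x‖) • T x = 0 := hyx ▸ hy0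
          rcases smul_eq_zero.mp h0 with h | h
          · exact absurd h (by positivity)
          · exact h
        rw [hTx]
        simp
        positivity
      have hyn : 0 < ‖y‖ := norm_pos_iff.mpr hy0
      set v : V := -((t / ‖y‖) • y) with hv
      have hvn : ‖v‖ = t := by
        rw [hv, norm_neg, norm_smul, Real.norm_eq_abs, abs_of_pos (by positivity),
          div_mul_cancel₀ _ hyn.ne']
      have hcond := hc v w (by rw [hvn]; exact htr) (by rw [hwn]; exact htr) a
      rw [← hA, aux_key] at hcond
      have h1 : A w - w = -y := by rw [hy, hTapp]; abel
      rw [h1] at hcond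
      have h2 : ⟪v, -y⟫ = t * ‖y‖ := by
        rw [hv, inner_neg_neg, real_inner_smul_left, real_inner_self_eq_norm_sq]
        field_simp
      rw [h2] at hcond
      have h3 : ‖y‖ = (t / ‖x‖) * ‖T x‖ := by
        rw [hyx, norm_smul, Real.norm_eq_abs, abs_of_pos (by positivity)]
      rw [h3] at hcond
      have h4 : (2 * t ^ 2 * ‖T x‖) / ‖x‖ ≤ L ^ 2 := by
        calc (2 * t ^ 2 * ‖T x‖) / ‖x‖ = 2 * (t * (t / ‖x‖ * ‖T x‖)) := by ring
          _ ≤ L ^ 2 := hcond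
      have h5 : 2 * t ^ 2 * ‖T x‖ ≤ L ^ 2 * ‖x‖ := (div_le_iff₀ hxn).mp h4
      rw [div_mul_eq_mul_div, le_div_iff₀ (by positivity)]
      linarith
    calc t ^ 2 * (2 * c) ≤ t ^ 2 * (2 * (L ^ 2 / (2 * t ^ 2))) := by
          have := mul_le_mul_of_nonneg_left hcle (le_of_lt (show (0:ℝ) < 2 by norm_num))
          exact mul_le_mul_of_nonneg_left this (by positivity)
      _ = L ^ 2 := by field_simp
  have hq : 0 < L / Real.sqrt (2 * c) := by positivity
  refine le_of_forall_lt fun s hs => ?_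
  rcases le_or_gt s 0 with h | h
  · exact lt_of_le_of_lt h hq
  obtain ⟨t, hst, htr⟩ := exists_between hs
  have ht0 : 0 < t := lt_trans h hst
  have hstep := step t ht0 htr
  have : t ≤ L / Real.sqrt (2 * c) := by
    rw [le_div_iff₀ (Real.sqrt_pos.mpr (by positivity))]
    nlinarith [Real.sq_sqrt (show (0:ℝ) ≤ 2 * c by positivity),
      Real.sqrt_nonneg (2 * c), hL.le]
  exact lt_of_lt_of_le hst this

end Aux

/-- for a holonomic space over an inner product space, the holonomy
radius at the origin equals `inf_{a ≠ 1} L(a) / sqrt(2 ‖id_V − a‖)`. -/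
theorem holRad_origin_eq_inf
    {V : Type*} [NormedAddCommGroup V] [InnerProductSpace ℝ V]
    (HS : HolonomicSpace V) :
    sSup {r : ℝ | 0 < r ∧ ∀ v w : V, ‖v‖ < r → ‖w‖ < r →
        ∀ A : HS.H, ‖v - w‖ ^ 2 - ‖v - (A : V ≃ₗᵢ[ℝ] V) w‖ ^ 2 ≤ HS.L A ^ 2}
      = ⨅ a : {b : HS.H // b ≠ 1},
          HS.L a.1 /
            Real.sqrt (2 * ‖ContinuousLinearMap.id ℝ V -
              ((a.1 : V ≃ₗᵢ[ℝ] V)).toLinearIsometry.toContinuousLinearMap‖) := by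
  classical
  set S : Set ℝ := {r : ℝ | 0 < r ∧ ∀ v w : V, ‖v‖ < r → ‖w‖ < r →
      ∀ A : HS.H, ‖v - w‖ ^ 2 - ‖v - (A : V ≃ₗᵢ[ℝ] V) w‖ ^ 2 ≤ HS.L A ^ 2} with hS
  set F : {b : HS.H // b ≠ 1} → ℝ := fun a =>
    HS.L a.1 / Real.sqrt (2 * ‖ContinuousLinearMap.id ℝ V -
      ((a.1 : V ≃ₗᵢ[ℝ] V)).toLinearIsometry.toContinuousLinearMap‖) with hF
  by_cases hne : Nonempty {b : HS.H // b ≠ 1}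
  · -- nonempty case
    haveI := hne
    obtain ⟨r₀, hr₀pos, hr₀⟩ := HS.convexity 0
    simp only [sub_zero] at hr₀
    have hr₀S : r₀ ∈ S := ⟨hr₀pos, hr₀⟩
    have hle : ∀ r ∈ S, ∀ a : {b : HS.H // b ≠ 1}, r ≤ F a := fun r hr a =>
      aux_memS_le HS r hr.1 hr.2 a.1 a.2
    have hbdd : BddBelow (Set.range F) := by
      refine ⟨0, ?_⟩
      rintro _ ⟨a, rfl⟩
      exact div_nonneg (HS.L_nonneg a.1) (Real.sqrt_nonneg _)
    set m : ℝ := ⨅ a, F a with hm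
    have hmpos : 0 < m := lt_of_lt_of_le hr₀pos (le_ciInf (hle r₀ hr₀S))
    have hmS : m ∈ S := by
      refine ⟨hmpos, fun v w hv hw A => ?_⟩
      rw [aux_key]
      by_cases hA : A = 1
      · subst hA
        simp [(HS.L_eq_zero 1).mpr rfl]
      · set c : ℝ := ‖ContinuousLinearMap.id ℝ V -
          ((A : V ≃ₗᵢ[ℝ] V)).toLinearIsometry.toContinuousLinearMap‖ with hc
        have hc0 : 0 < c := aux_pos _ (fun h => hA (Subtype.ext h))
        have hmle : m ≤ F ⟨A, hA⟩ := ciInf_le hbdd ⟨A, hA⟩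
        have hL0 : 0 ≤ HS.L A := HS.L_nonneg A
        have key2 : m ^ 2 * (2 * c) ≤ HS.L A ^ 2 := by
          have h1 : m * Real.sqrt (2 * c) ≤ HS.L A := by
            rw [← le_div_iff₀ (Real.sqrt_pos.mpr (by positivity))]
            exact hmle
          nlinarith [Real.sq_sqrt (show (0:ℝ) ≤ 2 * c by positivity),
            mul_le_mul h1 h1 (by positivity) hL0]
        have h1 : ⟪v, (A : V ≃ₗᵢ[ℝ] V) w - w⟫ ≤ ‖v‖ * ‖(A : V ≃ₗᵢ[ℝ] V) w - w‖ :=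
          real_inner_le_norm _ _
        have h2 : ‖(A : V ≃ₗᵢ[ℝ] V) w - w‖ ≤ c * ‖w‖ := by
          rw [norm_sub_rev]
          exact (ContinuousLinearMap.id ℝ V -
            ((A : V ≃ₗᵢ[ℝ] V)).toLinearIsometry.toContinuousLinearMap).le_opNorm w
        have h3 : ‖(A : V ≃ₗᵢ[ℝ] V) w - w‖ ≤ c * m :=
          h2.trans (by nlinarith [norm_nonneg w])
        calc 2 * ⟪v, (A : V ≃ₗᵢ[ℝ] V) w - w⟫
            ≤ 2 * (‖v‖ * ‖(A : V ≃ₗᵢ[ℝ] V) w - w‖) := by linarith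
          _ ≤ 2 * (m * (c * m)) := by
              have := mul_le_mul hv.le h3 (norm_nonneg _) hmpos.le
              linarith
          _ = m ^ 2 * (2 * c) := by ring
          _ ≤ HS.L A ^ 2 := key2
    obtain ⟨a₀⟩ := hne
    refine le_antisymm ?_ ?_
    · exact csSup_le ⟨r₀, hr₀S⟩ fun r hr => le_ciInf (hle r hr)
    · exact le_csSup ⟨F a₀, fun r hr => hle r hr a₀⟩ hmS
  · -- empty case
    have hall : ∀ a : HS.H, a = 1 := by
      intro a
      by_contra h
      exact hne ⟨⟨a, h⟩⟩
    haveI hiE : IsEmpty {b : HS.H // b ≠ 1} := not_nonempty_iff.mp hne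
    rw [Real.iInf_of_isEmpty]
    have hmem : ∀ M : ℝ, 0 < M → M ∈ S := by
      intro M hM
      refine ⟨hM, fun v w _ _ A => ?_⟩
      rw [hall A]
      simp [(HS.L_eq_zero 1).mpr rfl]
    apply Real.sSup_of_not_bddAbove
    rintro ⟨M, hM⟩
    have h1 : max M 0 + 1 ∈ S := hmem _ (by positivity)
    have h2 := hM h1
    have := le_max_left M 0
    linarith
end

section
/- Consider V = ℂ², H = ℝ acting by t·(z,w) = (e^{it}z, e^{i√2·t}w), and L(t) = |t|. Then inf_{t ≠ 0} |t| / sqrt(2‖id − a_t‖) = 0 (where a_t is the unitary operator of the action and ‖·‖ the operator norm), while there exists r > 0 (any r ≤ 1/√2) such that ‖u − a_t u‖ ≤ |t| for all u with ‖u‖ < r and all t ∈ ℝ. -/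
/-!
`aT t` is diagonal with phases `e^{it}` and `e^{i√2 t}`, so `‖id − aT t‖` is the larger of the two
numbers `|1 − e^{iθ}|`. Jordan's inequality `sin x ≥ 2x/π` bounds this from below by `2t/π` for
`0 < t ≤ π`, so `|t| / √(2‖id − aT t‖) ≤ √t → 0` and the infimum vanishes. From above,
`|1 − e^{iθ}| ≤ |θ|` gives `‖id − aT t‖ ≤ √2 |t|`, hence `‖u − aT t u‖ ≤ |t|` once `‖u‖ < 1/√2`.
-/

open Complex

/-- The action of `t ∈ ℝ` on `ℂ²` by `t·(z,w) = (e^{it} z, e^{i√2 t} w)`. -/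
noncomputable def aT (t : ℝ) :
    EuclideanSpace ℂ (Fin 2) →ₗ[ℂ] EuclideanSpace ℂ (Fin 2) where
  toFun u := WithLp.toLp 2 (fun i =>
    Complex.exp (Complex.I * (if i = 0 then (t : ℂ) else ((Real.sqrt 2 * t : ℝ) : ℂ))) * u i)
  map_add' u v := by
    ext i
    simp [mul_add]
  map_smul' c u := by
    ext i
    simp
    ring

open Real Filter Topology

theorem Complex.mul_abs_le_norm_exp_I_mul_ofReal_sub_one {x : ℝ} (hx : |x| ≤ π) :
    2 / π * |x| ≤ ‖exp (I * x) - 1‖ := by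
  have hsin : Real.sin (|x| / 2) ≤ |Real.sin (x / 2)| := by
    rcases abs_choice x with h | h <;> rw [h]
    · exact le_abs_self _
    · rw [neg_div, Real.sin_neg]; exact neg_le_abs _
  have hjordan := Real.mul_le_sin (x := |x| / 2) (by positivity) (by linarith)
  rw [norm_exp_I_mul_ofReal_sub_one, norm_mul, Real.norm_eq_abs, Real.norm_eq_abs, abs_two]
  linarith

noncomputable def aTAngle (t : ℝ) : Fin 2 → ℝ := ![t, √2 * t]

lemma aT_apply (t : ℝ) (u : EuclideanSpace ℂ (Fin 2)) (i : Fin 2) :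
    aT t u i = exp (I * aTAngle t i) * u i := by
  fin_cases i <;> simp [aT, aTAngle]

lemma abs_aTAngle_le (t : ℝ) (i : Fin 2) : |aTAngle t i| ≤ √2 * |t| := by
  fin_cases i
  · simpa [aTAngle] using le_mul_of_one_le_left (abs_nonneg t) (one_le_sqrt.mpr one_le_two)
  · simp [aTAngle, abs_mul, abs_of_nonneg (sqrt_nonneg 2)]

lemma id_sub_aT_eq_toEuclideanCLM_diagonal (t : ℝ) :
    ContinuousLinearMap.id ℂ _ - LinearMap.toContinuousLinearMap (aT t) =
      Matrix.toEuclideanCLM (n := Fin 2) (𝕜 := ℂ)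
        (Matrix.diagonal fun i => 1 - exp (I * aTAngle t i)) := by
  ext u i
  simp [aT_apply, sub_mul, Matrix.mulVec_diagonal]

open scoped Matrix.Norms.L2Operator in
lemma norm_id_sub_aT (t : ℝ) :
    ‖ContinuousLinearMap.id ℂ _ - LinearMap.toContinuousLinearMap (aT t)‖ =
      ‖fun i => 1 - exp (I * aTAngle t i)‖ := by
  rw [id_sub_aT_eq_toEuclideanCLM_diagonal, ← Matrix.l2_opNorm_diagonal,
    Matrix.l2_opNorm_toEuclideanCLM]

lemma norm_id_sub_aT_le (t : ℝ) :
    ‖ContinuousLinearMap.id ℂ _ - LinearMap.toContinuousLinearMap (aT t)‖ ≤ √2 * |t| := by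
  rw [norm_id_sub_aT, pi_norm_le_iff_of_nonneg (by positivity)]
  intro i
  rw [norm_sub_rev]
  exact norm_exp_I_mul_ofReal_sub_one_le.trans (abs_aTAngle_le t i)

lemma div_sqrt_two_mul_norm_id_sub_aT_le {t : ℝ} (ht : 0 < t) (htπ : t ≤ π) :
    t / √(2 * ‖ContinuousLinearMap.id ℂ _ - LinearMap.toContinuousLinearMap (aT t)‖) ≤ √t := by
  have hlower : 2 / π * t ≤
      ‖ContinuousLinearMap.id ℂ _ - LinearMap.toContinuousLinearMap (aT t)‖ := by
    calc 2 / π * t = 2 / π * |t| := by rw [abs_of_pos ht]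
      _ ≤ ‖1 - exp (I * aTAngle t 0)‖ := by
        rw [norm_sub_rev]
        exact mul_abs_le_norm_exp_I_mul_ofReal_sub_one (by rwa [abs_of_pos ht])
      _ ≤ _ := by
        rw [norm_id_sub_aT]
        exact norm_le_pi_norm (fun i => 1 - exp (I * aTAngle t i)) 0
  have ht_le : t ≤ 2 * ‖ContinuousLinearMap.id ℂ _ - LinearMap.toContinuousLinearMap (aT t)‖ := by
    have : t ≤ 2 * (2 / π * t) := by
      rw [← mul_assoc, le_mul_iff_one_le_left ht, ← mul_div_assoc, le_div_iff₀ pi_pos]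
      linarith [pi_le_four]
    linarith
  calc _ ≤ t / √t := div_le_div_of_nonneg_left ht.le (sqrt_pos.mpr ht) (sqrt_le_sqrt ht_le)
    _ = √t := div_sqrt

/-- for the action `t·(z,w)=(e^{it}z, e^{i√2 t}w)` on `ℂ²` with
`L(t)=|t|`, the holonomy radius at the origin `inf_{t≠0} |t|/sqrt(2‖id − a_t‖)`
is `0`, while the convexity radius is positive: there is `r > 0` with
`‖u − a_t u‖ ≤ |t|` whenever `‖u‖ < r` and `t ∈ ℝ`. -/
theorem example_holRad_zero_cvxRad_pos :
    (⨅ t : {s : ℝ // s ≠ 0},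
        |t.1| / Real.sqrt (2 * ‖ContinuousLinearMap.id ℂ (EuclideanSpace ℂ (Fin 2)) -
          LinearMap.toContinuousLinearMap (aT t.1)‖)) = 0
    ∧ ∃ r > 0, ∀ u : EuclideanSpace ℂ (Fin 2), ‖u‖ < r →
        ∀ t : ℝ, ‖u - aT t u‖ ≤ |t| := by
  constructor
  · have hnonneg : ∀ t : {s : ℝ // s ≠ 0}, 0 ≤ |t.1| / √(2 * ‖ContinuousLinearMap.id ℂ _ -
        LinearMap.toContinuousLinearMap (aT t.1)‖) := fun t => by positivity
    refine le_antisymm ?_ (Real.iInf_nonneg hnonneg)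
    refine ge_of_tendsto ((continuous_sqrt.tendsto' 0 0 sqrt_zero).mono_left
      nhdsWithin_le_nhds : Tendsto (√·) (𝓝[>] 0) (𝓝 0)) ?_
    filter_upwards [Ioo_mem_nhdsGT pi_pos] with t ⟨ht, htπ⟩
    calc _ ≤ _ := ciInf_le ⟨0, Set.forall_mem_range.mpr hnonneg⟩ ⟨t, ht.ne'⟩
      _ ≤ √t := by
        simpa [abs_of_pos ht] using div_sqrt_two_mul_norm_id_sub_aT_le ht htπ.le
  · refine ⟨(√2)⁻¹, by positivity, fun u hu t => ?_⟩
    calc ‖u - aT t u‖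
        = ‖(ContinuousLinearMap.id ℂ (EuclideanSpace ℂ (Fin 2)) -
            LinearMap.toContinuousLinearMap (aT t)) u‖ := rfl
      _ ≤ ‖ContinuousLinearMap.id ℂ _ - LinearMap.toContinuousLinearMap (aT t)‖ * ‖u‖ :=
        ContinuousLinearMap.le_opNorm _ u
      _ ≤ √2 * |t| * (√2)⁻¹ := by gcongr; exact norm_id_sub_aT_le t
      _ = |t| := by field_simp
end
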